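/- arXiv:2103.10646 — 4 statements merged into one kernel-verified Lean document; each statement's English description precedes it below -/
import Mathlib

section
/- Let β ∈ (0,1), h > 0, and let S₂ be a positive-integer-valued random variable with hazard rate μ₂ and unconditional probabilities p₂(i) = P(S₂ = i+1), p̄₂(i) = P(S₂ ≥ i+1). For μ₁ ∈ (0,1], define ψ(n₂) = h μ₁ · (β ∑_{i=0}^{n₂} β^i p₂(i)) / (1 + β μ₁ ∑_{i=0}^{n₂} β^i p̄₂(i)) · β/(1−β) and w₂(n₂) = h μ₂(n₂) β/(1−β). Then ψ(n₂) ≤ w₂(n₂+1) if and only if ψ(n₂+1) ≤ w₂(n₂+1). -/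
open MeasureTheory Filter

/-- Survival probability `P(S ≥ n+1)`. -/
noncomputable def surv {Ω : Type*} [MeasurableSpace Ω] (P : Measure Ω) (S : Ω → ℕ) (n : ℕ) : ℝ :=
  (P {ω | n + 1 ≤ S ω}).toReal

/-- Discrete hazard rate `μ(n) = P(S = n+1 | S ≥ n+1)`. -/
noncomputable def haz {Ω : Type*} [MeasurableSpace Ω] (P : Measure Ω) (S : Ω → ℕ) (n : ℕ) : ℝ :=
  (P {ω | S ω = n + 1}).toReal / surv P S n

/-- `ψ(n₂) = h μ₁ · (β ∑_{i=0}^{n₂} β^i p₂(i)) / (1 + β μ₁ ∑_{i=0}^{n₂} β^i p̄₂(i)) · β/(1−β)`. -/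
noncomputable def psiFn {Ω : Type*} [MeasurableSpace Ω] (P : Measure Ω) (S : Ω → ℕ)
    (β h μ₁ : ℝ) (n : ℕ) : ℝ :=
  h * μ₁ * (β * ∑ i ∈ Finset.range (n + 1), β ^ i * (P {ω | S ω = i + 1}).toReal) /
      (1 + β * μ₁ * ∑ i ∈ Finset.range (n + 1), β ^ i * surv P S i) * (β / (1 - β))

/-- `w₂(n) = h μ₂(n) β/(1−β)`. -/
noncomputable def w2Fn {Ω : Type*} [MeasurableSpace Ω] (P : Measure Ω) (S : Ω → ℕ)
    (β h : ℝ) (n : ℕ) : ℝ :=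
  h * haz P S n * (β / (1 - β))

/-- `ψ(n₂) ≤ w₂(n₂+1)` if and only if `ψ(n₂+1) ≤ w₂(n₂+1)`. -/
theorem psi_le_w2_iff {Ω : Type*} [MeasurableSpace Ω] (P : Measure Ω)
    [IsProbabilityMeasure P] (S : Ω → ℕ) (hS : Measurable S) (hS1 : ∀ ω, 1 ≤ S ω)
    (β h μ₁ : ℝ) (hβ : β ∈ Set.Ioo (0:ℝ) 1) (hh : 0 < h) (hμ₁ : μ₁ ∈ Set.Ioc (0:ℝ) 1)
    (n₂ : ℕ) :
    psiFn P S β h μ₁ n₂ ≤ w2Fn P S β h (n₂ + 1) ↔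
      psiFn P S β h μ₁ (n₂ + 1) ≤ w2Fn P S β h (n₂ + 1) := by
  obtain ⟨hβ0, hβ1⟩ := hβ
  obtain ⟨hμ0, hμ1⟩ := hμ₁
  have hc : 0 < β / (1 - β) := div_pos hβ0 (by linarith)
  set c := β / (1 - β) with hcdef
  set t := β ^ (n₂ + 1) with ht
  have htnn : 0 ≤ t := pow_nonneg hβ0.le _
  set p := (P {ω | S ω = n₂ + 1 + 1}).toReal with hp
  set s := surv P S (n₂ + 1) with hs
  set m := haz P S (n₂ + 1) with hm
  have hsnn : 0 ≤ s := ENNReal.toReal_nonneg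
  have hps : p ≤ s := by
    apply ENNReal.toReal_mono (measure_ne_top _ _)
    refine measure_mono fun ω hω => ?_
    simp only [Set.mem_setOf_eq] at *
    omega
  have hkey : p = m * s := by
    rcases eq_or_ne s 0 with h0 | h0
    · have hp0 : p = 0 := le_antisymm (h0 ▸ hps) ENNReal.toReal_nonneg
      simp [hp0, h0]
    · rw [hm, haz, ← hs, ← hp]
      field_simp
  set A := ∑ i ∈ Finset.range (n₂ + 1), β ^ i * (P {ω | S ω = i + 1}).toReal with hA
  set B := ∑ i ∈ Finset.range (n₂ + 1), β ^ i * surv P S i with hB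
  have hBnn : 0 ≤ B :=
    Finset.sum_nonneg fun i _ => mul_nonneg (pow_nonneg hβ0.le i) ENNReal.toReal_nonneg
  have hD1 : 0 < 1 + β * μ₁ * B := by positivity
  have hD2 : 0 < 1 + β * μ₁ * (B + t * s) := by
    have h1 : 0 ≤ t * s := mul_nonneg htnn hsnn
    have h2 : 0 ≤ β * μ₁ * (B + t * s) :=
      mul_nonneg (mul_nonneg hβ0.le hμ0.le) (add_nonneg hBnn h1)
    linarith
  have eA : (∑ i ∈ Finset.range (n₂ + 1 + 1), β ^ i * (P {ω | S ω = i + 1}).toReal)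
      = A + t * p := by rw [Finset.sum_range_succ]
  have eB : (∑ i ∈ Finset.range (n₂ + 1 + 1), β ^ i * surv P S i) = B + t * s := by
    rw [Finset.sum_range_succ]
  simp only [psiFn, w2Fn, eA, eB, ← hA, ← hB, ← hm, ← hcdef]
  rw [div_mul_eq_mul_div, div_mul_eq_mul_div, div_le_iff₀ hD1, div_le_iff₀ hD2]
  have E : h * μ₁ * (β * (A + t * p)) * c - h * m * c * (1 + β * μ₁ * (B + t * s))
      = h * μ₁ * (β * A) * c - h * m * c * (1 + β * μ₁ * B) := by
    rw [hkey]; ring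
  constructor <;> intro h' <;> linarith
end

section
/- Let β ∈ (0,1), h > 0, and let S₂ be a positive-integer-valued random variable whose discrete hazard rate μ₂ is increasing (IHR). Define w₂(n) = h · (1/(1−β) − ∑_{i=0}^{∞} β^i p̄₂(i|n)) / (∑_{i=0}^{∞} β^i p̄₂(i|n)). Then w₂(n) is increasing in n, and for every n, w₂(n) ≥ h μ₂(n) β/(1−β). -/
/-!
Conditioning on `S ≥ n+1` turns `p̄(i|n)` into the product `∏_{j<i} (1 - μ(n+j))`, so everything
reduces to the discounted survival sum `G(q) = ∑ βⁱ ∏_{j<i} (1 - q j)` of a hazard sequence `q`.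
Since `w₂ = h (1/(1-β) - G) / G` decreases in `G` and `G` decreases in the hazards, an increasing
hazard makes `w₂` increasing. For the bound, telescoping `βⁱ pᵢ qᵢ = βⁱ (pᵢ - pᵢ₊₁)` gives
`1 - (1-β) G = β ∑ βⁱ pᵢ qᵢ`, and monotonicity of `q` bounds the right side below by `β q₀ G`.
-/

open MeasureTheory Filter

/-- Conditional survival probability `p̄(i|n) = P(S ≥ n+i+1 | S ≥ n+1)`. -/
noncomputable def pbar {Ω : Type*} [MeasurableSpace Ω] (P : Measure Ω) (S : Ω → ℕ)
    (i n : ℕ) : ℝ :=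
  surv P S (n + i) / surv P S n

/-- `w₂(n) = h (1/(1−β) − ∑ β^i p̄₂(i|n)) / (∑ β^i p̄₂(i|n))`. -/
noncomputable def w2Idx {Ω : Type*} [MeasurableSpace Ω] (P : Measure Ω) (S : Ω → ℕ)
    (β h : ℝ) (n : ℕ) : ℝ :=
  h * (1 / (1 - β) - ∑' i : ℕ, β ^ i * pbar P S i n) / (∑' i : ℕ, β ^ i * pbar P S i n)

section DiscountedSurvival

open Finset

variable {q r : ℕ → ℝ} {β : ℝ}

noncomputable def discountedSurvival (β : ℝ) (q : ℕ → ℝ) : ℝ :=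
  ∑' i, β ^ i * ∏ j ∈ range i, (1 - q j)

lemma summable_pow_mul_of_abs_le_one (hβ0 : 0 ≤ β) (hβ1 : β < 1) {f : ℕ → ℝ}
    (hf : ∀ i, |f i| ≤ 1) : Summable fun i => β ^ i * f i :=
  (summable_geometric_of_lt_one hβ0 hβ1).of_norm_bounded fun i => by
    rw [Real.norm_eq_abs, abs_mul, abs_pow, abs_of_nonneg hβ0]
    exact mul_le_of_le_one_right (pow_nonneg hβ0 i) (hf i)

lemma prod_one_sub_nonneg (hq1 : ∀ j, q j ≤ 1) (i : ℕ) : 0 ≤ ∏ j ∈ range i, (1 - q j) :=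
  prod_nonneg fun j _ => sub_nonneg.2 (hq1 j)

lemma abs_prod_one_sub_le_one (hq0 : ∀ j, 0 ≤ q j) (hq1 : ∀ j, q j ≤ 1) (i : ℕ) :
    |∏ j ∈ range i, (1 - q j)| ≤ 1 := by
  rw [abs_of_nonneg (prod_one_sub_nonneg hq1 i)]
  exact prod_le_one (fun j _ => sub_nonneg.2 (hq1 j)) fun j _ => sub_le_self _ (hq0 j)

lemma summable_discountedSurvival (hβ0 : 0 ≤ β) (hβ1 : β < 1) (hq0 : ∀ j, 0 ≤ q j)
    (hq1 : ∀ j, q j ≤ 1) : Summable fun i => β ^ i * ∏ j ∈ range i, (1 - q j) :=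
  summable_pow_mul_of_abs_le_one hβ0 hβ1 (abs_prod_one_sub_le_one hq0 hq1)

lemma one_le_discountedSurvival (hβ0 : 0 ≤ β) (hβ1 : β < 1) (hq0 : ∀ j, 0 ≤ q j)
    (hq1 : ∀ j, q j ≤ 1) : 1 ≤ discountedSurvival β q := by
  simpa [discountedSurvival] using
    (summable_discountedSurvival hβ0 hβ1 hq0 hq1).le_tsum 0 fun i _ =>
      mul_nonneg (pow_nonneg hβ0 i) (prod_one_sub_nonneg hq1 i)

lemma discountedSurvival_le_of_le (hβ0 : 0 ≤ β) (hβ1 : β < 1) (hq0 : ∀ j, 0 ≤ q j)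
    (hr1 : ∀ j, r j ≤ 1) (hqr : q ≤ r) : discountedSurvival β r ≤ discountedSurvival β q := by
  have hq1 j : q j ≤ 1 := (hqr j).trans (hr1 j)
  have hr0 j : 0 ≤ r j := (hq0 j).trans (hqr j)
  refine (summable_discountedSurvival hβ0 hβ1 hr0 hr1).tsum_le_tsum (fun i => ?_)
    (summable_discountedSurvival hβ0 hβ1 hq0 hq1)
  refine mul_le_mul_of_nonneg_left ?_ (pow_nonneg hβ0 i)
  exact prod_le_prod (fun j _ => sub_nonneg.2 (hr1 j)) fun j _ => sub_le_sub_left (hqr j) 1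

lemma one_sub_mul_discountedSurvival (hβ0 : 0 ≤ β) (hβ1 : β < 1) (hq0 : ∀ j, 0 ≤ q j)
    (hq1 : ∀ j, q j ≤ 1) :
    1 - (1 - β) * discountedSurvival β q =
      β * ∑' i, β ^ i * ((∏ j ∈ range i, (1 - q j)) * q i) := by
  set p : ℕ → ℝ := fun i => ∏ j ∈ range i, (1 - q j)
  have hp := abs_prod_one_sub_le_one hq0 hq1
  have hG := summable_pow_mul_of_abs_le_one hβ0 hβ1 hp
  have hT := summable_pow_mul_of_abs_le_one hβ0 hβ1 fun i => hp (i + 1)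
  have hshift : discountedSurvival β q = 1 + β * ∑' i, β ^ i * p (i + 1) := by
    rw [discountedSurvival, hG.tsum_eq_zero_add, ← tsum_mul_left]
    simp only [p, pow_zero, prod_range_zero, mul_one, pow_succ]
    congr 1
    exact tsum_congr fun i => by ring
  have htelescope :
      ∑' i, β ^ i * (p i * q i) = discountedSurvival β q - ∑' i, β ^ i * p (i + 1) := by
    rw [discountedSurvival, ← hG.tsum_sub hT]
    exact tsum_congr fun i => by simp only [p, prod_range_succ]; ring
  rw [htelescope, hshift]
  ring

lemma mul_apply_zero_mul_discountedSurvival_le (hβ0 : 0 ≤ β) (hβ1 : β < 1)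
    (hq0 : ∀ j, 0 ≤ q j) (hq1 : ∀ j, q j ≤ 1) (hq : Monotone q) :
    β * q 0 * discountedSurvival β q ≤ 1 - (1 - β) * discountedSurvival β q := by
  have hp := abs_prod_one_sub_le_one hq0 hq1
  have hweighted :
      q 0 * discountedSurvival β q ≤ ∑' i, β ^ i * ((∏ j ∈ range i, (1 - q j)) * q i) := by
    rw [discountedSurvival, ← tsum_mul_left]
    refine ((summable_discountedSurvival hβ0 hβ1 hq0 hq1).mul_left _).tsum_le_tsum (fun i => ?_)
      (summable_pow_mul_of_abs_le_one hβ0 hβ1 fun i => ?_)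
    · rw [mul_comm, mul_assoc]
      exact mul_le_mul_of_nonneg_left (mul_le_mul_of_nonneg_left (hq (Nat.zero_le i))
        (prod_one_sub_nonneg hq1 i)) (pow_nonneg hβ0 i)
    · rw [abs_mul, abs_of_nonneg (hq0 i)]
      exact mul_le_one₀ (hp i) (hq0 i) (hq1 i)
  rw [one_sub_mul_discountedSurvival hβ0 hβ1 hq0 hq1, mul_assoc]
  exact mul_le_mul_of_nonneg_left hweighted hβ0

lemma apply_zero_mul_div_one_sub_le (hβ0 : 0 ≤ β) (hβ1 : β < 1) (hq0 : ∀ j, 0 ≤ q j)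
    (hq1 : ∀ j, q j ≤ 1) (hq : Monotone q) :
    q 0 * (β / (1 - β)) ≤ (1 / (1 - β) - discountedSurvival β q) / discountedSurvival β q := by
  have hG := one_le_discountedSurvival hβ0 hβ1 hq0 hq1
  have key := mul_apply_zero_mul_discountedSurvival_le hβ0 hβ1 hq0 hq1 hq
  have h1β : 0 < 1 - β := sub_pos.2 hβ1
  rw [le_div_iff₀ (zero_lt_one.trans_le hG)]
  calc q 0 * (β / (1 - β)) * discountedSurvival β q
      = β * q 0 * discountedSurvival β q / (1 - β) := by ring
    _ ≤ (1 - (1 - β) * discountedSurvival β q) / (1 - β) := by gcongr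
    _ = 1 / (1 - β) - discountedSurvival β q := by field_simp

end DiscountedSurvival

section Survival

variable {Ω : Type*} [MeasurableSpace Ω] (P : Measure Ω) (S : Ω → ℕ)

lemma toReal_measure_eq_le_surv [IsFiniteMeasure P] (n : ℕ) :
    (P {ω | S ω = n + 1}).toReal ≤ surv P S n :=
  ENNReal.toReal_mono (measure_ne_top P _) (measure_mono fun _ hω => (Eq.ge hω :))

lemma haz_nonneg (n : ℕ) : 0 ≤ haz P S n :=
  div_nonneg ENNReal.toReal_nonneg ENNReal.toReal_nonneg

lemma haz_le_one [IsFiniteMeasure P] (n : ℕ) : haz P S n ≤ 1 :=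
  div_le_one_of_le₀ (toReal_measure_eq_le_surv P S n) ENNReal.toReal_nonneg

variable {S}

lemma surv_succ [IsFiniteMeasure P] (hS : Measurable S) (n : ℕ) :
    surv P S (n + 1) = surv P S n - (P {ω | S ω = n + 1}).toReal := by
  have hunion : {ω | n + 1 ≤ S ω} = {ω | S ω = n + 1} ∪ {ω | n + 1 + 1 ≤ S ω} :=
    Set.ext fun ω => show n + 1 ≤ S ω ↔ S ω = n + 1 ∨ n + 1 + 1 ≤ S ω by omega
  have hdisj : Disjoint {ω | S ω = n + 1} {ω | n + 1 + 1 ≤ S ω} :=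
    Set.disjoint_left.2 fun ω (h1 : S ω = n + 1) (h2 : n + 1 + 1 ≤ S ω) => by omega
  simp only [surv]
  rw [hunion, measure_union hdisj (hS measurableSet_Ici),
    ENNReal.toReal_add (measure_ne_top P _) (measure_ne_top P _)]
  ring

lemma surv_succ_eq_mul [IsFiniteMeasure P] (hS : Measurable S) (n : ℕ) :
    surv P S (n + 1) = surv P S n * (1 - haz P S n) := by
  have hmass : haz P S n * surv P S n = (P {ω | S ω = n + 1}).toReal :=
    div_mul_cancel_of_imp fun h0 =>
      le_antisymm (h0 ▸ toReal_measure_eq_le_surv P S n) ENNReal.toReal_nonneg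
  rw [surv_succ P hS, ← hmass]
  ring

lemma pbar_eq_prod [IsFiniteMeasure P] (hS : Measurable S) {n : ℕ} (hn : surv P S n ≠ 0)
    (i : ℕ) : pbar P S i n = ∏ j ∈ Finset.range i, (1 - haz P S (n + j)) := by
  induction i with
  | zero => simp [pbar, hn]
  | succ k ih =>
    rw [Finset.prod_range_succ, ← ih, pbar, pbar, ← add_assoc, surv_succ_eq_mul P hS]
    ring

lemma w2Idx_eq [IsFiniteMeasure P] (hS : Measurable S) {n : ℕ} (hn : surv P S n ≠ 0)
    (β h : ℝ) :
    w2Idx P S β h n = h * (1 / (1 - β) - discountedSurvival β (fun j => haz P S (n + j))) /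
      discountedSurvival β (fun j => haz P S (n + j)) := by
  simp only [w2Idx, discountedSurvival, pbar_eq_prod P hS hn]

end Survival

lemma mul_sub_div_le_mul_sub_div {h c x y : ℝ} (hh : 0 ≤ h) (hc : 0 ≤ c) (hy : 0 < y)
    (hyx : y ≤ x) : h * (c - x) / x ≤ h * (c - y) / y := by
  rw [mul_div_assoc, mul_div_assoc, sub_div, sub_div, div_self hy.ne',
    div_self (hy.trans_le hyx).ne']
  gcongr

theorem IHR_w2_monotone_and_bound_general {Ω : Type*} [MeasurableSpace Ω] (P : Measure Ω)
    [IsProbabilityMeasure P] (S : Ω → ℕ) (hS : Measurable S)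
    (β h : ℝ) (hβ : β ∈ Set.Ioo (0:ℝ) 1) (hh : 0 < h)
    (hpos : ∀ n, 0 < surv P S n)
    (hIHR : ∀ n, haz P S n ≤ haz P S (n + 1)) :
    Monotone (fun n => w2Idx P S β h n) ∧
    ∀ n : ℕ, h * haz P S n * (β / (1 - β)) ≤ w2Idx P S β h n := by
  obtain ⟨hβ0, hβ1⟩ := hβ
  have hq0 n j : 0 ≤ haz P S (n + j) := haz_nonneg P S _
  have hq1 n j : haz P S (n + j) ≤ 1 := haz_le_one P S _
  have hmono : Monotone (haz P S) := monotone_nat_of_le_succ hIHR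
  have hw n := w2Idx_eq P hS (hpos n).ne' β h
  refine ⟨monotone_nat_of_le_succ fun n => ?_, fun n => ?_⟩
  · rw [hw, hw]
    exact mul_sub_div_le_mul_sub_div hh.le (one_div_nonneg.2 (sub_pos.2 hβ1).le)
      (zero_lt_one.trans_le (one_le_discountedSurvival hβ0.le hβ1 (hq0 _) (hq1 _)))
      (discountedSurvival_le_of_le hβ0.le hβ1 (hq0 n) (hq1 (n + 1)) fun j => hmono (by omega))
  · rw [hw, mul_assoc, mul_div_assoc]
    exact mul_le_mul_of_nonneg_left (apply_zero_mul_div_one_sub_le hβ0.le hβ1 (hq0 n) (hq1 n)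
      fun i j hij => hmono (by omega)) hh.le

/-- For IHR `S₂`, `w₂(n)` is increasing in `n` and `w₂(n) ≥ h μ₂(n) β/(1−β)`. -/
theorem IHR_w2_monotone_and_bound {Ω : Type*} [MeasurableSpace Ω] (P : Measure Ω)
    [IsProbabilityMeasure P] (S : Ω → ℕ) (hS : Measurable S) (hS1 : ∀ ω, 1 ≤ S ω)
    (β h : ℝ) (hβ : β ∈ Set.Ioo (0:ℝ) 1) (hh : 0 < h)
    (hpos : ∀ n, 0 < surv P S n)
    (hIHR : ∀ n, haz P S n ≤ haz P S (n + 1)) :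
    Monotone (fun n => w2Idx P S β h n) ∧
    ∀ n : ℕ, h * haz P S n * (β / (1 - β)) ≤ w2Idx P S β h n :=
  IHR_w2_monotone_and_bound_general P S hS β h hβ hh hpos hIHR
end

section
/- Let S be a positive-integer-valued random variable with decreasing hazard rate μ, and let c > 0. Define f(n) = P(S ≤ n+1) / (c + E[min{S, n+1}]) for n ≥ 0. Then for every n, f(n) > μ(n+1) if and only if f(n) > f(n+1). Consequently, sup_{n ≥ 0} f(n) is attained at the first n (if any) for which f(n) > μ(n+1). -/
open MeasureTheory Filter

/-- `f(n) = P(S ≤ n+1) / (c + E[min{S, n+1}])`. -/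
noncomputable def gittinsQuot {Ω : Type*} [MeasurableSpace Ω] (P : Measure Ω) (S : Ω → ℕ)
    (c : ℝ) (n : ℕ) : ℝ :=
  (P {ω | S ω ≤ n + 1}).toReal / (c + ∫ ω, ((min (S ω) (n + 1) : ℕ) : ℝ) ∂P)

private lemma alg_iff (A B p q : ℝ) (hB : 0 < B) (hq : 0 < q) :
    p / q < A / B ↔ (A + p) / (B + q) < A / B := by
  rw [div_lt_div_iff₀ hq hB, div_lt_div_iff₀ (by linarith) hB]
  constructor <;> intro h <;> nlinarith

private lemma alg_med (A B p q : ℝ) (hB : 0 < B) (hq : 0 < q) (h : p / q < A / B) :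
    p / q < (A + p) / (B + q) := by
  rw [div_lt_div_iff₀ hq hB] at h
  rw [div_lt_div_iff₀ hq (by linarith)]
  nlinarith

private lemma alg_mono (A B p q : ℝ) (hB : 0 < B) (hq : 0 < q) (h : A / B ≤ p / q) :
    A / B ≤ (A + p) / (B + q) := by
  rw [div_le_div_iff₀ hB hq] at h
  rw [div_le_div_iff₀ hB (by linarith)]
  nlinarith

private lemma seq_aux (f g : ℕ → ℝ)
    (hiff : ∀ n, g (n+1) < f n ↔ f (n+1) < f n)
    (hmed : ∀ n, g (n+1) < f n → g (n+1) < f (n+1))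
    (hmono : ∀ n, f n ≤ g (n+1) → f n ≤ f (n+1))
    (hDHR : ∀ n, g (n+2) ≤ g (n+1)) :
    ∀ n, (g (n+1) < f n ∧ ∀ m, m < n → ¬ g (m+1) < f m) → ∀ m, f m ≤ f n := by
  rintro n ⟨h1, h2⟩ m
  have up : ∀ k, m ≤ k → k ≤ n → f m ≤ f k := by
    intro k hk
    induction k, hk using Nat.le_induction with
    | base => intro _; exact le_rfl
    | succ k hk IH =>
      intro hkn
      have hk' : k ≤ n := by omega
      have := hmono k (not_lt.mp (h2 k (by omega)))
      exact (IH hk').trans this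
  have down : ∀ k, n ≤ k → g (k+1) < f k ∧ f k ≤ f n := by
    intro k hk
    induction k, hk using Nat.le_induction with
    | base => exact ⟨h1, le_rfl⟩
    | succ k hk IH =>
      refine ⟨lt_of_le_of_lt (hDHR k) (hmed k IH.1), ?_⟩
      exact le_trans (le_of_lt ((hiff k).mp IH.1)) IH.2
  rcases le_total m n with h | h
  · exact up n h le_rfl
  · exact (down m h).2

private lemma numer_step {Ω : Type*} [MeasurableSpace Ω] (P : Measure Ω)
    [IsProbabilityMeasure P] (S : Ω → ℕ) (hS : Measurable S) (n : ℕ) :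
    (P {ω | S ω ≤ n + 1 + 1}).toReal
      = (P {ω | S ω ≤ n + 1}).toReal + (P {ω | S ω = n + 1 + 1}).toReal := by
  have hu : {ω | S ω ≤ n + 1 + 1} = {ω | S ω ≤ n + 1} ∪ {ω | S ω = n + 1 + 1} := by
    ext ω; simp only [Set.mem_setOf_eq, Set.mem_union]; omega
  have hd : Disjoint {ω | S ω ≤ n + 1} {ω | S ω = n + 1 + 1} := by
    rw [Set.disjoint_left]; intro ω h1 h2
    simp only [Set.mem_setOf_eq] at h1 h2; omega
  rw [hu, measure_union hd (hS (measurableSet_singleton _)),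
    ENNReal.toReal_add (measure_ne_top P _) (measure_ne_top P _)]

private lemma int_min {Ω : Type*} [MeasurableSpace Ω] (P : Measure Ω)
    [IsProbabilityMeasure P] (S : Ω → ℕ) (hS : Measurable S) (m : ℕ) :
    Integrable (fun ω => ((min (S ω) m : ℕ) : ℝ)) P := by
  apply Integrable.mono' (integrable_const ((m : ℕ) : ℝ))
  · exact (measurable_from_top.comp (hS.min measurable_const)).aestronglyMeasurable
  · filter_upwards with ω
    rw [Real.norm_eq_abs, abs_of_nonneg (by positivity)]
    exact_mod_cast min_le_right _ _

private lemma denom_step {Ω : Type*} [MeasurableSpace Ω] (P : Measure Ω)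
    [IsProbabilityMeasure P] (S : Ω → ℕ) (hS : Measurable S) (n : ℕ) :
    (∫ ω, ((min (S ω) (n + 1 + 1) : ℕ) : ℝ) ∂P)
      = (∫ ω, ((min (S ω) (n + 1) : ℕ) : ℝ) ∂P) + surv P S (n + 1) := by
  have hmeas : MeasurableSet {ω | n + 1 + 1 ≤ S ω} := hS measurableSet_Ici
  have hpt : ∀ ω, ((min (S ω) (n + 1 + 1) : ℕ) : ℝ)
      = ((min (S ω) (n + 1) : ℕ) : ℝ)
        + Set.indicator {ω | n + 1 + 1 ≤ S ω} (fun _ => (1 : ℝ)) ω := by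
    intro ω
    by_cases h : n + 1 + 1 ≤ S ω
    · rw [Set.indicator_of_mem (show ω ∈ {ω | n + 1 + 1 ≤ S ω} from h)]
      have h1 : min (S ω) (n + 1 + 1) = n + 1 + 1 := min_eq_right h
      have h2 : min (S ω) (n + 1) = n + 1 := min_eq_right (by omega)
      rw [h1, h2]; push_cast; ring
    · rw [Set.indicator_of_notMem (show ω ∉ {ω | n + 1 + 1 ≤ S ω} from h)]
      have h1 : min (S ω) (n + 1 + 1) = S ω := min_eq_left (by omega)
      have h2 : min (S ω) (n + 1) = S ω := min_eq_left (by omega)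
      rw [h1, h2, add_zero]
  rw [integral_congr_ae (Eventually.of_forall hpt),
    integral_add (int_min P S hS (n + 1)) ((integrable_const (1 : ℝ)).indicator hmeas)]
  congr 1
  rw [integral_indicator_const (1 : ℝ) hmeas, smul_eq_mul, mul_one]
  rfl

/-- For DHR `S` and `c > 0`: `f(n) > μ(n+1)` iff `f(n) > f(n+1)`; consequently the
supremum of `f` is attained at the first `n` (if any) with `f(n) > μ(n+1)`. -/
theorem DHR_gittins_quotient_maximizer {Ω : Type*} [MeasurableSpace Ω] (P : Measure Ω)
    [IsProbabilityMeasure P] (S : Ω → ℕ) (hS : Measurable S) (hS1 : ∀ ω, 1 ≤ S ω)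
    (c : ℝ) (hc : 0 < c) (hpos : ∀ n, 0 < surv P S n)
    (hDHR : ∀ n, haz P S (n + 1) ≤ haz P S n) :
    (∀ n : ℕ, haz P S (n + 1) < gittinsQuot P S c n ↔
      gittinsQuot P S c (n + 1) < gittinsQuot P S c n) ∧
    (∀ n : ℕ,
      (haz P S (n + 1) < gittinsQuot P S c n ∧
        ∀ m, m < n → ¬ haz P S (m + 1) < gittinsQuot P S c m) →
      ∀ m : ℕ, gittinsQuot P S c m ≤ gittinsQuot P S c n) := by
  have hbpos : ∀ n : ℕ, 0 < c + ∫ ω, ((min (S ω) (n + 1) : ℕ) : ℝ) ∂P := by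
    intro n
    have : 0 ≤ ∫ ω, ((min (S ω) (n + 1) : ℕ) : ℝ) ∂P :=
      integral_nonneg fun ω => by positivity
    linarith
  have hq : ∀ n : ℕ, gittinsQuot P S c (n + 1)
      = ((P {ω | S ω ≤ n + 1}).toReal + (P {ω | S ω = n + 1 + 1}).toReal)
        / ((c + ∫ ω, ((min (S ω) (n + 1) : ℕ) : ℝ) ∂P) + surv P S (n + 1)) := by
    intro n
    unfold gittinsQuot
    rw [numer_step P S hS n, denom_step P S hS n, ← add_assoc]
  have hhaz : ∀ n : ℕ, haz P S (n + 1)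
      = (P {ω | S ω = n + 1 + 1}).toReal / surv P S (n + 1) := fun n => rfl
  have hiff : ∀ n, haz P S (n + 1) < gittinsQuot P S c n ↔
      gittinsQuot P S c (n + 1) < gittinsQuot P S c n := by
    intro n
    rw [hq n, hhaz n]
    exact alg_iff _ _ _ _ (hbpos n) (hpos (n + 1))
  refine ⟨hiff, ?_⟩
  apply seq_aux (gittinsQuot P S c) (haz P S) hiff
  · intro n h
    rw [hq n, hhaz n] at *
    exact alg_med _ _ _ _ (hbpos n) (hpos (n + 1)) h
  · intro n h
    rw [hq n, hhaz n] at *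
    exact alg_mono _ _ _ _ (hbpos n) (hpos (n + 1)) h
  · intro n; exact hDHR (n + 1)
end

section
/- Let β ∈ (0,1), h > 0, ν ≥ 0, and let S₂ be a positive-integer-valued random variable with hazard rate μ₂. The system of linear equations V(n) = h + ν + β(1 − μ₂(n)) V(n+1) for n ∈ {0,...,m}, with boundary value V(m+1) = h/(1−β), has unique bounded solution V(n) = (h+ν) ∑_{i=0}^{m−n} β^i p̄₂(i|n) + h β^{m−n+1} p̄₂(m−n+1|n)/(1−β). Moreover V(m) ≤ h/(1−β) if and only if ν ≤ h μ₂(m) β/(1−β). -/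
open MeasureTheory Filter

/-- The closed-form solution of the Howard equations:
`V(n) = (h+ν) ∑_{i=0}^{m−n} β^i p̄₂(i|n) + h β^{m−n+1} p̄₂(m−n+1|n)/(1−β)`. -/
noncomputable def Vform {Ω : Type*} [MeasurableSpace Ω] (P : Measure Ω) (S : Ω → ℕ)
    (β h ν : ℝ) (m n : ℕ) : ℝ :=
  (h + ν) * (∑ i ∈ Finset.range (m - n + 1), β ^ i * pbar P S i n) +
    h * β ^ (m - n + 1) * pbar P S (m - n + 1) n / (1 - β)

section Aux

variable {Ω : Type*} [MeasurableSpace Ω] (P : Measure Ω) [IsProbabilityMeasure P]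
  (S : Ω → ℕ)

lemma surv_split (hS : Measurable S) (n : ℕ) :
    surv P S n = (P {ω | S ω = n + 1}).toReal + surv P S (n + 1) := by
  have hset : {ω | n + 1 ≤ S ω} = {ω | S ω = n + 1} ∪ {ω | n + 1 + 1 ≤ S ω} := by
    ext ω; simp only [Set.mem_setOf_eq, Set.mem_union]; omega
  have hm2 : MeasurableSet {ω | n + 1 + 1 ≤ S ω} := hS measurableSet_Ici
  have hdisj : Disjoint {ω | S ω = n + 1} {ω | n + 1 + 1 ≤ S ω} := by
    rw [Set.disjoint_left]; intro ω h1 h2; simp only [Set.mem_setOf_eq] at h1 h2; omega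
  unfold surv
  rw [hset, measure_union hdisj hm2,
    ENNReal.toReal_add (measure_ne_top _ _) (measure_ne_top _ _)]

lemma one_sub_haz (hS : Measurable S) (hpos : ∀ n, 0 < surv P S n) (n : ℕ) :
    1 - haz P S n = surv P S (n + 1) / surv P S n := by
  have h := surv_split P S hS n
  have h0 : surv P S n ≠ 0 := (hpos n).ne'
  unfold haz
  rw [eq_div_iff h0, sub_mul, one_mul, div_mul_cancel₀ _ h0]
  linarith

lemma pbar_zero (hpos : ∀ n, 0 < surv P S n) (n : ℕ) : pbar P S 0 n = 1 := by
  unfold pbar; rw [Nat.add_zero]; exact div_self (hpos n).ne'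

lemma pbar_succ (hS : Measurable S) (hpos : ∀ n, 0 < surv P S n) (i n : ℕ) :
    pbar P S (i + 1) n = (1 - haz P S n) * pbar P S i (n + 1) := by
  rw [one_sub_haz P S hS hpos]
  unfold pbar
  rw [show n + (i + 1) = n + 1 + i from by omega]
  rw [div_mul_div_comm, mul_comm (surv P S (n + 1)) (surv P S (n + 1 + i)),
    mul_div_mul_right _ _ (hpos (n + 1)).ne']

lemma Vform_rec (hS : Measurable S) (hpos : ∀ n, 0 < surv P S n)
    (β h ν : ℝ) {m n : ℕ} (hn : n < m) :
    Vform P S β h ν m n = h + ν + β * (1 - haz P S n) * Vform P S β h ν m (n + 1) := by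
  obtain ⟨d, hd⟩ : ∃ d, m - (n + 1) = d := ⟨_, rfl⟩
  have hd2 : m - n = d + 1 := by omega
  unfold Vform
  rw [hd, hd2]
  rw [Finset.sum_range_succ']
  simp only [pow_zero, one_mul, pbar_zero P S hpos]
  have hsum : ∀ i ∈ Finset.range (d + 1),
      β ^ (i + 1) * pbar P S (i + 1) n
        = β * (1 - haz P S n) * (β ^ i * pbar P S i (n + 1)) := by
    intro i _
    rw [pbar_succ P S hS hpos]
    ring
  rw [Finset.sum_congr rfl hsum, ← Finset.mul_sum]
  rw [show d + 1 + 1 = (d + 1) + 1 from rfl, pbar_succ P S hS hpos (d + 1) n]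
  ring

lemma Vform_top (hS : Measurable S) (hpos : ∀ n, 0 < surv P S n)
    (β h ν : ℝ) (m : ℕ) :
    Vform P S β h ν m m = h + ν + β * (1 - haz P S m) * (h / (1 - β)) := by
  unfold Vform
  rw [Nat.sub_self]
  rw [Finset.sum_range_one]
  simp only [pow_zero, one_mul, pbar_zero P S hpos]
  rw [show (0 : ℕ) + 1 = 1 from rfl, pow_one,
    pbar_succ P S hS hpos 0 m, pbar_zero P S hpos]
  ring

end Aux

/-- The Howard equations `V(n) = h + ν + β(1 − μ₂(n)) V(n+1)` for `n ∈ {0,...,m}` with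
boundary value `V(m+1) = h/(1−β)` have a (unique) solution given by `Vform`, and
`V(m) ≤ h/(1−β)` iff `ν ≤ h μ₂(m) β/(1−β)`. -/
theorem howard_equations_solution {Ω : Type*} [MeasurableSpace Ω] (P : Measure Ω)
    [IsProbabilityMeasure P] (S : Ω → ℕ) (hS : Measurable S) (hS1 : ∀ ω, 1 ≤ S ω)
    (β h ν : ℝ) (hβ : β ∈ Set.Ioo (0:ℝ) 1) (hh : 0 < h) (hν : 0 ≤ ν)
    (hpos : ∀ n, 0 < surv P S n) (m : ℕ) :
    (∃ V : ℕ → ℝ,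
      (∀ n ≤ m, V n = h + ν + β * (1 - haz P S n) * V (n + 1)) ∧
      V (m + 1) = h / (1 - β)) ∧
    (∀ V : ℕ → ℝ,
      (∀ n ≤ m, V n = h + ν + β * (1 - haz P S n) * V (n + 1)) →
      V (m + 1) = h / (1 - β) →
      ∀ n ≤ m, V n = Vform P S β h ν m n) ∧
    (Vform P S β h ν m m ≤ h / (1 - β) ↔ ν ≤ h * haz P S m * (β / (1 - β))) := by
  have hb1 : (0:ℝ) < 1 - β := by linarith [hβ.2]
  refine ⟨?_, ?_, ?_⟩
  · refine ⟨fun n => if n ≤ m then Vform P S β h ν m n else h / (1 - β), ?_, ?_⟩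
    · intro n hn
      dsimp only
      rcases eq_or_lt_of_le hn with rfl | hlt
      · rw [if_pos le_rfl, if_neg (by omega)]
        exact Vform_top P S hS hpos β h ν n
      · rw [if_pos hn, if_pos (by omega : n + 1 ≤ m)]
        exact Vform_rec P S hS hpos β h ν hlt
    · dsimp only
      rw [if_neg (by omega)]
  · intro V hrec hbd
    have key : ∀ k n, n ≤ m → m - n = k → V n = Vform P S β h ν m n := by
      intro k
      induction k with
      | zero =>
        intro n hn hk
        have : n = m := by omega
        subst this
        rw [hrec n le_rfl, hbd, Vform_top P S hS hpos]
      | succ k ih =>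
        intro n hn hk
        have hlt : n < m := by omega
        rw [hrec n hn, ih (n + 1) (by omega) (by omega),
          Vform_rec P S hS hpos β h ν hlt]
    intro n hn
    exact key (m - n) n hn rfl
  · rw [Vform_top P S hS hpos]
    have e1 : h + ν + β * (1 - haz P S m) * (h / (1 - β))
        = ν - h * haz P S m * (β / (1 - β)) + h / (1 - β) := by
      field_simp
      ring
    rw [e1]
    constructor <;> intro hx <;> linarith
end
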